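/- Let S ⊆ G^n = F_2^{2n} be a self-dual subspace with coordinates partitioned among three parties M = {A,B,C}, with full local ranks (S_α = 0 for all α). Suppose S equals the sum of its co-local subgroups, S = S_{Â} + S_{B̂} + S_{Ĉ}. Then this sum is a direct sum: S = S_{Â} ⊕ S_{B̂} ⊕ S_{Ĉ}, and in particular dim(S_{Â}) + dim(S_{B̂}) + dim(S_{Ĉ}) = n. -/

import Mathlib

/-- The phase space of `ι`-indexed qubits: `G^ι = (F_2 × F_2)^ι`. -/
abbrev PV (ι : Type*) := ι → ZMod 2 × ZMod 2

/-- The standard symplectic form `ω(f,g) = Σ_j (f_j^x g_j^z + f_j^z g_j^x)`. -/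
noncomputable def sympForm (ι : Type*) [Fintype ι] :
    LinearMap.BilinForm (ZMod 2) (PV ι) :=
  LinearMap.mk₂ (ZMod 2)
    (fun f g => ∑ j, ((f j).1 * (g j).2 + (f j).2 * (g j).1))
    (fun m₁ m₂ g => by
      rw [← Finset.sum_add_distrib]
      exact Finset.sum_congr rfl fun j _ => by
        simp only [Pi.add_apply, Prod.fst_add, Prod.snd_add]; ring)
    (fun c m g => by
      simp only [Pi.smul_apply, Prod.smul_fst, Prod.smul_snd, smul_eq_mul]
      rw [Finset.mul_sum]
      exact Finset.sum_congr rfl fun j _ => by ring)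
    (fun m g₁ g₂ => by
      rw [← Finset.sum_add_distrib]
      exact Finset.sum_congr rfl fun j _ => by
        simp only [Pi.add_apply, Prod.fst_add, Prod.snd_add]; ring)
    (fun c m g => by
      simp only [Pi.smul_apply, Prod.smul_fst, Prod.smul_snd, smul_eq_mul]
      rw [Finset.mul_sum]
      exact Finset.sum_congr rfl fun j _ => by ring)

/-- The restriction of the symplectic form to the coordinates in `A`:
`ω(f_A, g_A)`. -/
def sympOn {ι : Type*} (A : Finset ι) (f g : PV ι) : ZMod 2 :=
  ∑ j ∈ A, ((f j).1 * (g j).2 + (f j).2 * (g j).1)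

/-- The set of qubits owned by party `α`. -/
def partySet {ι M : Type*} [Fintype ι] [DecidableEq M] (party : ι → M) (α : M) :
    Finset ι := Finset.univ.filter (fun j => party j = α)

/-- The local subspace `G^n_α` of vectors supported on party `α`'s qubits. -/
def localSub {ι M : Type*} (party : ι → M) (α : M) :
    Submodule (ZMod 2) (PV ι) where
  carrier := {f | ∀ j, party j ≠ α → f j = 0}
  add_mem' := fun hf hg j hj => by
    simp only [Pi.add_apply, hf j hj, hg j hj, add_zero]
  zero_mem' := fun j _ => rfl
  smul_mem' := fun c f hf j hj => by
    simp only [Pi.smul_apply, hf j hj, smul_zero]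

/-- The co-local subgroup `S_α̂` of elements of `S` acting trivially on party `α`. -/
def colocalSub {ι M : Type*} (S : Submodule (ZMod 2) (PV ι)) (party : ι → M) (α : M) :
    Submodule (ZMod 2) (PV ι) :=
  S ⊓ { carrier := {f | ∀ j, party j = α → f j = 0}
        add_mem' := fun hf hg j hj => by
          simp only [Pi.add_apply, hf j hj, hg j hj, add_zero]
        zero_mem' := fun j _ => rfl
        smul_mem' := fun c f hf j hj => by
          simp only [Pi.smul_apply, hf j hj, smul_zero] }

/-- `S_loc`, the sum of all co-local subgroups of `S`. -/
def Sloc {ι M : Type*} (S : Submodule (ZMod 2) (PV ι)) (party : ι → M) :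
    Submodule (ZMod 2) (PV ι) :=
  ⨆ α : M, colocalSub S party α

/-- The subspace `L_α = {f ∈ G^n_α : ω(f, S_loc) = 0}`. -/
noncomputable def Lsub {ι M : Type*} [Fintype ι] (S : Submodule (ZMod 2) (PV ι))
    (party : ι → M) (α : M) : Submodule (ZMod 2) (PV ι) :=
  localSub party α ⊓ LinearMap.BilinForm.orthogonal (sympForm ι) (Sloc S party)


section Aux
open Finset Module LinearMap.BilinForm

lemma sympForm_apply {ι : Type*} [Fintype ι] (f g : PV ι) :
    sympForm ι f g = ∑ j, ((f j).1 * (g j).2 + (f j).2 * (g j).1) := rfl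

lemma sympForm_comm {ι : Type*} [Fintype ι] (f g : PV ι) :
    sympForm ι f g = sympForm ι g f := by
  simp only [sympForm_apply]
  exact Finset.sum_congr rfl fun j _ => by ring

lemma sympForm_isRefl {ι : Type*} [Fintype ι] : (sympForm ι).IsRefl := by
  intro x y h
  rw [sympForm_comm]; exact h

lemma sympOn_eq_zero_left {ι : Type*} {A : Finset ι} {f : PV ι} (g : PV ι)
    (h : ∀ j ∈ A, f j = 0) : sympOn A f g = 0 :=
  Finset.sum_eq_zero fun j hj => by rw [h j hj]; simp

lemma sympOn_eq_zero_right {ι : Type*} {A : Finset ι} (f : PV ι) {g : PV ι}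
    (h : ∀ j ∈ A, g j = 0) : sympOn A f g = 0 :=
  Finset.sum_eq_zero fun j hj => by rw [h j hj]; simp

lemma sympOn_congr_right {ι : Type*} {A : Finset ι} (f : PV ι) {g g' : PV ι}
    (h : ∀ j ∈ A, g j = g' j) : sympOn A f g = sympOn A f g' :=
  Finset.sum_congr rfl fun j hj => by rw [h j hj]

lemma fin3_cases : ∀ {α β γ : Fin 3}, α ≠ β → β ≠ γ → α ≠ γ →
    ∀ δ : Fin 3, δ = α ∨ δ = β ∨ δ = γ := by decide

lemma zmod2pair_add_eq_zero : ∀ x y : ZMod 2 × ZMod 2, x + y = 0 → x = y := by decide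

lemma symp_split3 {n : ℕ} (party : Fin n → Fin 3) {α β γ : Fin 3}
    (hab : α ≠ β) (hbc : β ≠ γ) (hac : α ≠ γ) (f g : PV (Fin n)) :
    sympForm (Fin n) f g = sympOn (partySet party α) f g + sympOn (partySet party β) f g
      + sympOn (partySet party γ) f g := by
  have huniv : ({α, β, γ} : Finset (Fin 3)) = Finset.univ := by
    apply Finset.eq_univ_iff_forall.mpr
    intro δ
    simp only [Finset.mem_insert, Finset.mem_singleton]
    exact fin3_cases hab hbc hac δ
  have hsplit : sympForm (Fin n) f g = ∑ δ : Fin 3, sympOn (partySet party δ) f g := by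
    rw [sympForm_apply]
    simp only [sympOn, partySet]
    exact (Finset.sum_fiberwise _ party _).symm
  rw [hsplit, ← huniv, Finset.sum_insert (by simp [hab, hac]),
    Finset.sum_insert (by simp [hbc]), Finset.sum_singleton, add_assoc]

lemma mem_colocal {ι M : Type*} {S : Submodule (ZMod 2) (PV ι)} {party : ι → M} {α : M}
    {f : PV ι} : f ∈ colocalSub S party α ↔ f ∈ S ∧ ∀ j, party j = α → f j = 0 :=
  Submodule.mem_inf

lemma mem_local {ι M : Type*} {party : ι → M} {α : M} {f : PV ι} :
    f ∈ localSub party α ↔ ∀ j, party j ≠ α → f j = 0 := Iff.rfl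

lemma vanish_on_party {ι M : Type*} [Fintype ι] [DecidableEq M] {party : ι → M} {α : M} {f : PV ι}
    (h : ∀ j, party j = α → f j = 0) : ∀ j ∈ partySet party α, f j = 0 := by
  intro j hj
  exact h j (by simpa [partySet] using hj)

lemma key_disjoint (n : ℕ) (party : Fin n → Fin 3) (S : Submodule (ZMod 2) (PV (Fin n)))
    (hsd : S = LinearMap.BilinForm.orthogonal (sympForm (Fin n)) S)
    (hfull : ∀ α, S ⊓ localSub party α = ⊥)
    (hgen : S = ⨆ α : Fin 3, colocalSub S party α)
    {α β γ : Fin 3} (hab : α ≠ β) (hbc : β ≠ γ) (hac : α ≠ γ) :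
    Disjoint (colocalSub S party α) (colocalSub S party β ⊔ colocalSub S party γ) := by
  have hiso : ∀ s ∈ S, ∀ t ∈ S, sympForm (Fin n) s t = 0 := by
    intro s hs t ht
    rw [hsd] at ht
    exact ht s hs
  rw [Submodule.disjoint_def]
  intro f hfα hfsup
  obtain ⟨g, hg, h, hh, hghf⟩ := Submodule.mem_sup.mp hfsup
  obtain ⟨hfS, hfv⟩ := mem_colocal.mp hfα
  obtain ⟨hgS, hgv⟩ := mem_colocal.mp hg
  obtain ⟨hhS, hhv⟩ := mem_colocal.mp hh
  -- g and h agree on party α's coordinates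
  have hgh : ∀ j, party j = α → g j = h j := by
    intro j hj
    apply zmod2pair_add_eq_zero
    rw [show g j + h j = (g + h) j from rfl, hghf]
    exact hfv j hj
  -- the restriction of g to party γ's coordinates
  set gC : PV (Fin n) := fun j => if party j = γ then g j else 0 with hgCdef
  have hgC_loc : ∀ j, party j ≠ γ → gC j = 0 := fun j hj => if_neg hj
  have hgC_eq : ∀ j ∈ partySet party γ, gC j = g j := by
    intro j hj
    simp only [partySet, Finset.mem_filter] at hj
    exact if_pos hj.2
  -- ω(s, gC) = ω_γ(s, g) for every s
  have hred : ∀ s : PV (Fin n), sympForm (Fin n) s gC = sympOn (partySet party γ) s g := by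
    intro s
    rw [symp_split3 party hab hbc hac,
      sympOn_eq_zero_right _ (fun j hj => hgC_loc j (by
        simp only [partySet, Finset.mem_filter] at hj; rw [hj.2]; exact hac)),
      sympOn_eq_zero_right _ (fun j hj => hgC_loc j (by
        simp only [partySet, Finset.mem_filter] at hj; rw [hj.2]; exact hbc)),
      sympOn_congr_right _ hgC_eq, zero_add, zero_add]
  -- gC is orthogonal to all of S
  have hORTH : ∀ s ∈ S, sympForm (Fin n) s gC = 0 := by
    intro s hs
    rw [hgen] at hs
    refine Submodule.iSup_induction (motive := fun s => sympForm (Fin n) s gC = 0) _ hs ?_ ?_ ?_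
    · intro δ s' hs'
      obtain ⟨hs'S, hs'v⟩ := mem_colocal.mp hs'
      rw [hred]
      rcases fin3_cases hab hbc hac δ with rfl | rfl | rfl
      · -- s' vanishes on δ = α
        have h1 := symp_split3 party hab hbc hac s' g
        rw [hiso s' hs'S g hgS, sympOn_eq_zero_left _ (vanish_on_party hs'v),
          sympOn_eq_zero_right _ (vanish_on_party hgv), zero_add, zero_add] at h1
        exact h1.symm
      · -- s' vanishes on δ = β
        have hA : sympOn (partySet party α) s' g = 0 := by
          rw [sympOn_congr_right _ (fun j hj => hgh j (by simpa [partySet] using hj))]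
          have h2 := symp_split3 party hab hbc hac s' h
          rw [hiso s' hs'S h hhS, sympOn_eq_zero_left _ (vanish_on_party hs'v),
            sympOn_eq_zero_right _ (vanish_on_party hhv), add_zero, add_zero] at h2
          exact h2.symm
        have h1 := symp_split3 party hab hbc hac s' g
        rw [hiso s' hs'S g hgS, hA, sympOn_eq_zero_right _ (vanish_on_party hgv),
          zero_add, zero_add] at h1
        exact h1.symm
      · exact sympOn_eq_zero_left _ (vanish_on_party hs'v)
    · simp
    · intro x y hx hy
      rw [map_add, LinearMap.add_apply, hx, hy, add_zero]
  -- hence gC ∈ S ⊓ localSub γ = ⊥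
  have hgC0 : gC = 0 := by
    have hmem : gC ∈ S ⊓ localSub party γ := by
      refine ⟨?_, hgC_loc⟩
      rw [hsd]
      exact fun s hs => hORTH s hs
    rw [hfull γ] at hmem
    exact hmem
  have hgγ : ∀ j, party j = γ → g j = 0 := by
    intro j hj
    have := congrFun hgC0 j
    rw [hgCdef] at this
    simpa [hj] using this
  -- hence g is supported on α, so g = 0
  have hg0 : g = 0 := by
    have hmem : g ∈ S ⊓ localSub party α := by
      refine ⟨hgS, fun j hj => ?_⟩
      rcases fin3_cases hab hbc hac (party j) with h' | h' | h'
      · exact absurd h' hj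
      · exact hgv j h'
      · exact hgγ j h'
    rw [hfull α] at hmem
    exact hmem
  -- hence f = h is supported on β, so f = 0
  have hfh : f = h := by rw [← hghf, hg0, zero_add]
  have hmem : f ∈ S ⊓ localSub party β := by
    refine ⟨hfS, fun j hj => ?_⟩
    rcases fin3_cases hab hbc hac (party j) with h' | h' | h'
    · exact hfv j h'
    · exact absurd h' hj
    · rw [hfh]; exact hhv j h'
  rw [hfull β] at hmem
  exact hmem

lemma symp_nondeg (ι : Type*) [Fintype ι] [DecidableEq ι] :
    (sympForm ι).Nondegenerate := by
  have hL : ∀ f : PV ι, (∀ g, sympForm ι f g = 0) → f = 0 := by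
    intro f hf
    funext j
    have key : ∀ v : ZMod 2 × ZMod 2,
        sympForm ι f (Pi.single j v) = (f j).1 * v.2 + (f j).2 * v.1 := by
      intro v
      rw [sympForm_apply]
      rw [Finset.sum_eq_single j]
      · rw [Pi.single_eq_same]
      · intro b _ hb
        rw [Pi.single_eq_of_ne hb]
        simp
      · simp
    have h1 := hf (Pi.single j (0, 1))
    have h2 := hf (Pi.single j (1, 0))
    rw [key] at h1 h2
    simp only [mul_one, mul_zero, add_zero, zero_add] at h1 h2
    exact Prod.ext (by simpa using h1) (by simpa using h2)
  exact ⟨hL, fun f hf => hL f fun g => by rw [sympForm_comm]; exact hf g⟩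

end Aux

/-- For a tripartite self-dual `S` with full local ranks that is
the sum of its co-local subgroups, the sum is direct and the dimensions of the
three co-local subgroups add up to `n`. -/
theorem colocal_sum_direct (n : ℕ) (party : Fin n → Fin 3)
    (S : Submodule (ZMod 2) (PV (Fin n)))
    (hsd : S = LinearMap.BilinForm.orthogonal (sympForm (Fin n)) S)
    (hfull : ∀ α, S ⊓ localSub party α = ⊥)
    (hgen : S = ⨆ α : Fin 3, colocalSub S party α) :
    iSupIndep (fun α : Fin 3 => colocalSub S party α) ∧
    Module.finrank (ZMod 2) (colocalSub S party 0) +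
      Module.finrank (ZMod 2) (colocalSub S party 1) +
      Module.finrank (ZMod 2) (colocalSub S party 2) = n := by
  classical
  set c : Fin 3 → Submodule (ZMod 2) (PV (Fin n)) := fun α => colocalSub S party α with hc
  have h01 : (0 : Fin 3) ≠ 1 := by decide
  have h12 : (1 : Fin 3) ≠ 2 := by decide
  have h02 : (0 : Fin 3) ≠ 2 := by decide
  have key := fun {α β γ : Fin 3} hab hbc hac =>
    key_disjoint n party S hsd hfull hgen (α := α) (β := β) (γ := γ) hab hbc hac
  -- independence
  have hindep : iSupIndep c := by
    rw [iSupIndep_def]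
    intro i
    fin_cases i
    · refine Disjoint.mono_right ?_ (key h01 h12 h02)
      refine iSup_le fun j => iSup_le fun hj => ?_
      fin_cases j
      · exact absurd rfl hj
      · exact le_sup_left
      · exact le_sup_right
    · refine Disjoint.mono_right ?_ (key (Ne.symm h01) h02 h12)
      refine iSup_le fun j => iSup_le fun hj => ?_
      fin_cases j
      · exact le_sup_left
      · exact absurd rfl hj
      · exact le_sup_right
    · refine Disjoint.mono_right ?_ (key (Ne.symm h02) h01 (Ne.symm h12))
      refine iSup_le fun j => iSup_le fun hj => ?_
      fin_cases j
      · exact le_sup_left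
      · exact le_sup_right
      · exact absurd rfl hj
  refine ⟨hindep, ?_⟩
  -- dimension count
  have hrefl := sympForm_isRefl (ι := Fin n)
  have hV : Module.finrank (ZMod 2) (PV (Fin n)) = 2 * n := by
    rw [Module.finrank_pi_fintype]
    simp [Module.finrank_prod, mul_comm]
  have hSn : Module.finrank (ZMod 2) S = n := by
    have h := LinearMap.BilinForm.finrank_add_finrank_orthogonal hrefl
      (B := sympForm (Fin n)) S
    rw [LinearMap.BilinForm.orthogonal_top_eq_bot (symp_nondeg _), inf_bot_eq, finrank_bot,
      ← hsd, hV, add_zero] at h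
    omega
  have hsup : S = c 0 ⊔ c 1 ⊔ c 2 := by
    rw [hgen]
    apply le_antisymm
    · refine iSup_le fun δ => ?_
      fin_cases δ
      · exact le_sup_left.trans le_sup_left
      · exact le_sup_right.trans le_sup_left
      · exact le_sup_right
    · refine sup_le (sup_le ?_ ?_) ?_
      · exact le_iSup c 0
      · exact le_iSup c 1
      · exact le_iSup c 2
  have d12' : Disjoint (c 1) (c 2) :=
    Disjoint.mono_right le_sup_right (key (Ne.symm h01) h02 h12)
  have d0 : Disjoint (c 0) (c 1 ⊔ c 2) := key h01 h12 h02
  have e12 : Module.finrank (ZMod 2) ↥(c 1 ⊔ c 2) =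
      Module.finrank (ZMod 2) (c 1) + Module.finrank (ZMod 2) (c 2) := by
    have h := Submodule.finrank_sup_add_finrank_inf_eq (c 1) (c 2)
    rw [disjoint_iff.mp d12', finrank_bot] at h
    omega
  have e012 : Module.finrank (ZMod 2) ↥(c 0 ⊔ (c 1 ⊔ c 2)) =
      Module.finrank (ZMod 2) (c 0) + Module.finrank (ZMod 2) (c 1) +
        Module.finrank (ZMod 2) (c 2) := by
    have h := Submodule.finrank_sup_add_finrank_inf_eq (c 0) (c 1 ⊔ c 2)
    rw [disjoint_iff.mp d0, finrank_bot, e12] at h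
    omega
  have : Module.finrank (ZMod 2) S =
      Module.finrank (ZMod 2) (c 0) + Module.finrank (ZMod 2) (c 1) +
        Module.finrank (ZMod 2) (c 2) := by
    rw [hsup, sup_assoc, e012]
  rw [hSn] at this
  exact this.symm
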